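/- arXiv:1901.01802 — 4 statements merged into one kernel-verified Lean document; each statement's English description precedes it below -/
import Mathlib

section
/- Triangle inequality for k-broad norms: let U ⊆ ℝⁿ be measurable, 1 ≤ p < ∞, A ∈ ℕ, 2 ≤ k ≤ n. There is a constant C = C(n, p) such that for any 0 < δ < β and any two disjoint finite families 𝕋₁, 𝕋₂ of δ-tubes, with the cap partition of 𝕋₁ ∪ 𝕋₂ given by (𝕋₁ ∪ 𝕋₂)[τ] = 𝕋₁[τ] ∪ 𝕋₂[τ], one has ‖Σ_{T∈𝕋₁∪𝕋₂} χ_T‖_{BL^p_{k,2A}(U)} ≤ C ( ‖Σ_{T∈𝕋₁} χ_T‖_{BL^p_{k,A}(U)} + ‖Σ_{T∈𝕋₂} χ_T‖_{BL^p_{k,A}(U)} ). -/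
open MeasureTheory Metric InnerProductGeometry
open scoped RealInnerProductSpace ENNReal NNReal

noncomputable section

/-- Euclidean space ℝⁿ. -/
abbrev Esp (n : ℕ) : Type := EuclideanSpace ℝ (Fin n)

/-- The δ-tube with centre `a` and unit direction `v`. -/
def tube (n : ℕ) (δ : ℝ) (a v : Esp n) : Set (Esp n) :=
  {x | |⟪x - a, v⟫| ≤ 1 / 2 ∧ ‖(x - a) - ⟪x - a, v⟫ • v‖ ≤ δ}

/-- Unsigned angle between a vector and a linear subspace: the infimum of the angles
between `v` and the nonzero elements of `V`. -/
def angleSub {n : ℕ} (v : Esp n) (V : Submodule ℝ (Esp n)) : ℝ :=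
  ⨅ w : {w : Esp n // w ∈ V ∧ w ≠ 0}, angle v w.1

/-- Angle between the cap of radius β centred at ω and a subspace. -/
def angleCap {n : ℕ} (β : ℝ) (ω : Esp n) (V : Submodule ℝ (Esp n)) : ℝ :=
  ⨅ u : {u : Esp n // ‖u‖ = 1 ∧ ‖u - ω‖ < β}, angleSub u.1 V

/-- `W` is a maximal β-separated subset of the unit sphere (maximality being expressed by
the fact that every unit vector lies in the cap around some element of `W`). -/
def MaximalSeparated (n : ℕ) (β : ℝ) (W : Set (Esp n)) : Prop :=
  (∀ ω ∈ W, ‖ω‖ = 1) ∧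
  (∀ ω ∈ W, ∀ ω' ∈ W, ω ≠ ω' → β ≤ ‖ω - ω'‖) ∧
  (∀ u : Esp n, ‖u‖ = 1 → ∃ ω ∈ W, ‖u - ω‖ < β)

/-- The quantity μ_𝕋(B) in the definition of the k-broad norm, for the δ-ball centred
at `c`.  The family 𝕋 of tubes is `T : ι → Set (Esp n)`, and `ω i ∈ W` is the centre of
the cap containing the direction of the tube `T i` (so the cap partition is
𝕋[τ_{ω₀}] = {T i : ω i = ω₀}). -/
def broadMu (n k A : ℕ) (p β δ : ℝ) (W : Set (Esp n)) {ι : Type} [Fintype ι]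
    (T : ι → Set (Esp n)) (ω : ι → Esp n) (c : Esp n) : ℝ≥0∞ :=
  ⨅ V : {V : Fin A → Submodule ℝ (Esp n) // ∀ a, Module.finrank ℝ (V a) = k - 1},
    ⨆ ω₀ : {ω₀ : Esp n // ω₀ ∈ W ∧ ∀ a, β < angleCap β ω₀ (V.1 a)},
      ∫⁻ x in ball c δ,
        (∑' i : {i : ι // ω i = ω₀.1}, Set.indicator (T i.1) (fun _ => (1 : ℝ≥0∞)) x) ^ p

/-- The k-broad norm ‖Σ_{T∈𝕋} χ_T‖_{BL^p_{k,A}(U)}, relative to a family of δ-balls with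
centres `b j`, a set `W` of cap centres and a cap assignment `ω` for the tubes `T`. -/
def broadNorm (n k A : ℕ) (p β δ : ℝ) (W : Set (Esp n)) {ι : Type} [Fintype ι]
    (T : ι → Set (Esp n)) (ω : ι → Esp n) (b : ℕ → Esp n) (U : Set (Esp n)) : ℝ≥0∞ :=
  (∑' j : ℕ, volume (ball (b j) δ ∩ U) / volume (ball (b j) δ) *
      broadMu n k A p β δ W T ω (b j)) ^ (1 / p)

/-- A finitely-overlapping cover of ℝⁿ by δ-balls. -/
def FinOverlapCover (n : ℕ) (δ : ℝ) (b : ℕ → Esp n) : Prop :=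
  (∀ x : Esp n, ∃ j, x ∈ ball (b j) δ) ∧
  (∀ x : Esp n, {j : ℕ | x ∈ ball (b j) δ}.Finite ∧ {j : ℕ | x ∈ ball (b j) δ}.ncard ≤ 5 ^ n)

/-! Two `A`-tuples of subspaces, one for each family, concatenate to a `2A`-tuple, and a cap that
is broad for the concatenation is broad for both halves. On such a cap the count of the union is
the sum of the two counts, so `(a + b)^p ≤ 2^(p-1) (a^p + b^p)` bounds `μ_{𝕋₁ ∪ 𝕋₂}(B)` by
`2^(p-1) (μ_{𝕋₁}(B) + μ_{𝕋₂}(B))`. Summing over the balls and using subadditivity of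
`t ↦ t^(1/p)` gives the constant `(2^(p-1))^(1/p) ≤ 2`. -/

lemma measurableSet_tube (n : ℕ) (δ : ℝ) (a v : Esp n) : MeasurableSet (tube n δ a v) := by
  have hproj : Continuous fun x : Esp n => ⟪x - a, v⟫ := by fun_prop
  have hperp : Continuous fun x : Esp n => ‖(x - a) - ⟪x - a, v⟫ • v‖ := by fun_prop
  exact ((isClosed_le hproj.abs continuous_const).inter
    (isClosed_le hperp continuous_const)).measurableSet

/-- `Σ_{T ∈ 𝕋[τ]} χ_T`, where `τ` is the cap centred at `ω₀`. -/
def capCount {X Ω ι : Type*} (T : ι → Set X) (ω : ι → Ω) (ω₀ : Ω) (x : X) : ℝ≥0∞ :=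
  ∑' i : {i : ι // ω i = ω₀}, Set.indicator (T i.1) (fun _ => (1 : ℝ≥0∞)) x

lemma capCount_sum_elim {X Ω ι₁ ι₂ : Type*} (T₁ : ι₁ → Set X) (T₂ : ι₂ → Set X)
    (ω₁ : ι₁ → Ω) (ω₂ : ι₂ → Ω) (ω₀ : Ω) (x : X) :
    capCount (Sum.elim T₁ T₂) (Sum.elim ω₁ ω₂) ω₀ x =
      capCount T₁ ω₁ ω₀ x + capCount T₂ ω₂ ω₀ x := by
  rw [capCount, ← Equiv.subtypeSum.symm.tsum_eq, ENNReal.summable.tsum_sum ENNReal.summable]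
  rfl

lemma measurable_capCount {X Ω ι : Type*} [MeasurableSpace X] [Countable ι] {T : ι → Set X}
    (hT : ∀ i, MeasurableSet (T i)) (ω : ι → Ω) (ω₀ : Ω) : Measurable (capCount T ω ω₀) :=
  Measurable.tsum fun i => measurable_const.indicator (hT i.1)

lemma lintegral_add_rpow_le {X : Type*} [MeasurableSpace X] {μ : Measure X} {f : X → ℝ≥0∞}
    (hf : Measurable f) (g : X → ℝ≥0∞) {p : ℝ} (hp : 1 ≤ p) :
    ∫⁻ x, (f x + g x) ^ p ∂μ ≤ 2 ^ (p - 1) * (∫⁻ x, f x ^ p ∂μ + ∫⁻ x, g x ^ p ∂μ) :=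
  calc ∫⁻ x, (f x + g x) ^ p ∂μ ≤ ∫⁻ x, 2 ^ (p - 1) * (f x ^ p + g x ^ p) ∂μ :=
        lintegral_mono fun x => ENNReal.rpow_add_le_mul_rpow_add_rpow _ _ hp
    _ = 2 ^ (p - 1) * (∫⁻ x, f x ^ p ∂μ + ∫⁻ x, g x ^ p ∂μ) := by
        rw [lintegral_const_mul' _ _ (by simp), lintegral_add_left (hf.pow_const p)]

def doubleAppend {α : Type*} {A : ℕ} (V₁ V₂ : Fin A → α) : Fin (2 * A) → α :=
  Fin.append V₁ V₂ ∘ Fin.cast (two_mul A)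

lemma forall_doubleAppend_iff {α : Type*} {A : ℕ} (V₁ V₂ : Fin A → α) (P : α → Prop) :
    (∀ a, P (doubleAppend V₁ V₂ a)) ↔ (∀ a, P (V₁ a)) ∧ ∀ a, P (V₂ a) := by
  rw [← (finCongr (two_mul A)).symm.forall_congr_right, Fin.forall_fin_add]
  simp only [doubleAppend, finCongr_symm, finCongr_apply, Function.comp_apply, Fin.cast_cast,
    Fin.cast_eq_self, Fin.append_left, Fin.append_right]

section BroadMu

variable {n k A : ℕ} {p β δ : ℝ} {W : Set (Esp n)} {ι₁ ι₂ : Type}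
  {T₁ : ι₁ → Set (Esp n)} {T₂ : ι₂ → Set (Esp n)} {ω₁ : ι₁ → Esp n} {ω₂ : ι₂ → Esp n}

lemma iSup_broadCaps_doubleAppend_le [Countable ι₁] (hp : 1 ≤ p)
    (hT₁ : ∀ i, MeasurableSet (T₁ i)) (c : Esp n) (V₁ V₂ : Fin A → Submodule ℝ (Esp n)) :
    ⨆ ω₀ : {ω₀ : Esp n // ω₀ ∈ W ∧ ∀ a, β < angleCap β ω₀ (doubleAppend V₁ V₂ a)},
        ∫⁻ x in ball c δ, capCount (Sum.elim T₁ T₂) (Sum.elim ω₁ ω₂) ω₀.1 x ^ p ≤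
      2 ^ (p - 1) *
        ((⨆ ω₀ : {ω₀ : Esp n // ω₀ ∈ W ∧ ∀ a, β < angleCap β ω₀ (V₁ a)},
            ∫⁻ x in ball c δ, capCount T₁ ω₁ ω₀.1 x ^ p) +
          ⨆ ω₀ : {ω₀ : Esp n // ω₀ ∈ W ∧ ∀ a, β < angleCap β ω₀ (V₂ a)},
            ∫⁻ x in ball c δ, capCount T₂ ω₂ ω₀.1 x ^ p) := by
  refine iSup_le fun ⟨ω₀, hω₀W, hω₀⟩ => ?_
  obtain ⟨hω₀₁, hω₀₂⟩ := (forall_doubleAppend_iff V₁ V₂ (β < angleCap β ω₀ ·)).1 hω₀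
  simp_rw [capCount_sum_elim]
  refine (lintegral_add_rpow_le (measurable_capCount hT₁ ω₁ ω₀) _ hp).trans ?_
  gcongr
  · exact le_iSup_of_le (⟨ω₀, hω₀W, hω₀₁⟩ : {ω₀ // _}) le_rfl
  · exact le_iSup_of_le (⟨ω₀, hω₀W, hω₀₂⟩ : {ω₀ // _}) le_rfl

lemma broadMu_sum_elim_le [Fintype ι₁] [Fintype ι₂] (hp : 1 ≤ p)
    (hT₁ : ∀ i, MeasurableSet (T₁ i)) (c : Esp n) :
    broadMu n k (2 * A) p β δ W (Sum.elim T₁ T₂) (Sum.elim ω₁ ω₂) c ≤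
      2 ^ (p - 1) * (broadMu n k A p β δ W T₁ ω₁ c + broadMu n k A p β δ W T₂ ω₂ c) := by
  have htwo : (2 : ℝ≥0∞) ^ (p - 1) ≠ 0 := by simp
  have htwo' : (2 : ℝ≥0∞) ^ (p - 1) ≠ ⊤ := by simp
  unfold broadMu
  rw [mul_add, ENNReal.mul_iInf_of_ne htwo htwo', ENNReal.mul_iInf_of_ne htwo htwo']
  refine ENNReal.le_iInf_add_iInf fun V₁ V₂ => ?_
  have hrank := (forall_doubleAppend_iff V₁.1 V₂.1 (Module.finrank ℝ · = k - 1)).2 ⟨V₁.2, V₂.2⟩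
  rw [← mul_add]
  exact iInf_le_of_le ⟨doubleAppend V₁.1 V₂.1, hrank⟩
    (iSup_broadCaps_doubleAppend_le hp hT₁ c V₁.1 V₂.1)

end BroadMu

lemma broadNorm_le_of_broadMu_le {n k A A₁ A₂ : ℕ} {p β δ : ℝ} (hp : 1 ≤ p) {W : Set (Esp n)}
    {ι ι₁ ι₂ : Type} [Fintype ι] [Fintype ι₁] [Fintype ι₂]
    {T : ι → Set (Esp n)} {T₁ : ι₁ → Set (Esp n)} {T₂ : ι₂ → Set (Esp n)}
    {ω : ι → Esp n} {ω₁ : ι₁ → Esp n} {ω₂ : ι₂ → Esp n} (b : ℕ → Esp n) (U : Set (Esp n))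
    {K : ℝ≥0∞} (h : ∀ c, broadMu n k A p β δ W T ω c ≤
      K * (broadMu n k A₁ p β δ W T₁ ω₁ c + broadMu n k A₂ p β δ W T₂ ω₂ c)) :
    broadNorm n k A p β δ W T ω b U ≤
      K ^ (1 / p) * (broadNorm n k A₁ p β δ W T₁ ω₁ b U + broadNorm n k A₂ p β δ W T₂ ω₂ b U) := by
  have hp₀ : 0 ≤ 1 / p := by positivity
  set w : ℕ → ℝ≥0∞ := fun j => volume (ball (b j) δ ∩ U) / volume (ball (b j) δ)
  set S₁ := ∑' j, w j * broadMu n k A₁ p β δ W T₁ ω₁ (b j)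
  set S₂ := ∑' j, w j * broadMu n k A₂ p β δ W T₂ ω₂ (b j)
  have hsum : ∑' j, w j * broadMu n k A p β δ W T ω (b j) ≤ K * (S₁ + S₂) := by
    rw [← ENNReal.tsum_add, ← ENNReal.tsum_mul_left]
    refine ENNReal.tsum_le_tsum fun j => ?_
    calc w j * broadMu n k A p β δ W T ω (b j)
        ≤ w j * (K * (broadMu n k A₁ p β δ W T₁ ω₁ (b j) +
            broadMu n k A₂ p β δ W T₂ ω₂ (b j))) := by gcongr; exact h _
      _ = _ := by ring
  calc broadNorm n k A p β δ W T ω b U ≤ (K * (S₁ + S₂)) ^ (1 / p) :=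
        ENNReal.rpow_le_rpow hsum hp₀
    _ ≤ K ^ (1 / p) * (S₁ ^ (1 / p) + S₂ ^ (1 / p)) := by
        rw [ENNReal.mul_rpow_of_nonneg _ _ hp₀]
        exact mul_le_mul_right (ENNReal.rpow_add_le_add_rpow _ _ hp₀
          ((div_le_one (by linarith)).2 hp)) _

theorem statement7_general (n k : ℕ)
    (p : ℝ) (hp : 1 ≤ p) (A : ℕ) :
    ∃ C : ℝ, 0 < C ∧
      ∀ (U : Set (Esp n)), MeasurableSet U →
      ∀ (β : ℝ), β < 1 → ∀ (δ : ℝ), 0 < δ → δ < β →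
      ∀ (m₁ m₂ : ℕ) (a₁ v₁ : Fin m₁ → Esp n) (a₂ v₂ : Fin m₂ → Esp n),
        (∀ i, ‖v₁ i‖ = 1) → (∀ i, ‖v₂ i‖ = 1) →
      ∀ (W : Set (Esp n)), MaximalSeparated n β W →
      ∀ (ω₁ : Fin m₁ → Esp n), (∀ i, ω₁ i ∈ W ∧ ‖v₁ i - ω₁ i‖ < β) →
      ∀ (ω₂ : Fin m₂ → Esp n), (∀ i, ω₂ i ∈ W ∧ ‖v₂ i - ω₂ i‖ < β) →
      ∀ (b : ℕ → Esp n),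
        broadNorm n k (2 * A) p β δ W
            (Sum.elim (fun i => tube n δ (a₁ i) (v₁ i)) (fun i => tube n δ (a₂ i) (v₂ i)))
            (Sum.elim ω₁ ω₂) b U ≤
          ENNReal.ofReal C *
            (broadNorm n k A p β δ W (fun i => tube n δ (a₁ i) (v₁ i)) ω₁ b U +
              broadNorm n k A p β δ W (fun i => tube n δ (a₂ i) (v₂ i)) ω₂ b U) := by
  refine ⟨2, two_pos, fun U _ β _ δ _ _ m₁ m₂ a₁ v₁ a₂ v₂ _ _ W _ ω₁ _ ω₂ _ b => ?_⟩
  have hconst : ((2 : ℝ≥0∞) ^ (p - 1)) ^ (1 / p) ≤ ENNReal.ofReal 2 := by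
    rw [← ENNReal.rpow_mul, ENNReal.ofReal_ofNat]
    conv_rhs => rw [← ENNReal.rpow_one 2]
    refine ENNReal.rpow_le_rpow_of_exponent_le one_le_two ?_
    rw [sub_mul, mul_one_div_cancel (by linarith)]
    linarith [show 0 ≤ 1 / p by positivity]
  refine (broadNorm_le_of_broadMu_le hp b U fun c =>
    broadMu_sum_elim_le hp (fun i => measurableSet_tube n δ (a₁ i) (v₁ i)) c).trans ?_
  gcongr

/-- Triangle inequality for k-broad norms: there is `C = C(n,p)` such that for any
measurable `U`, any two (disjointly indexed) families 𝕋₁, 𝕋₂ of δ-tubes and any cap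
partitions of them (inducing the cap partition of the union),
`‖Σ_{T∈𝕋₁∪𝕋₂} χ_T‖_{BL^p_{k,2A}(U)} ≤ C (‖Σ_{T∈𝕋₁} χ_T‖_{BL^p_{k,A}(U)} +
‖Σ_{T∈𝕋₂} χ_T‖_{BL^p_{k,A}(U)})`. -/
theorem statement7 (n k : ℕ) (hn : 2 ≤ n) (hk2 : 2 ≤ k) (hkn : k ≤ n)
    (p : ℝ) (hp : 1 ≤ p) (A : ℕ) :
    ∃ C : ℝ, 0 < C ∧
      ∀ (U : Set (Esp n)), MeasurableSet U →
      ∀ (β : ℝ), β < 1 → ∀ (δ : ℝ), 0 < δ → δ < β →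
      ∀ (m₁ m₂ : ℕ) (a₁ v₁ : Fin m₁ → Esp n) (a₂ v₂ : Fin m₂ → Esp n),
        (∀ i, ‖v₁ i‖ = 1) → (∀ i, ‖v₂ i‖ = 1) →
      ∀ (W : Set (Esp n)), MaximalSeparated n β W →
      ∀ (ω₁ : Fin m₁ → Esp n), (∀ i, ω₁ i ∈ W ∧ ‖v₁ i - ω₁ i‖ < β) →
      ∀ (ω₂ : Fin m₂ → Esp n), (∀ i, ω₂ i ∈ W ∧ ‖v₂ i - ω₂ i‖ < β) →
      ∀ (b : ℕ → Esp n),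
        broadNorm n k (2 * A) p β δ W
            (Sum.elim (fun i => tube n δ (a₁ i) (v₁ i)) (fun i => tube n δ (a₂ i) (v₂ i)))
            (Sum.elim ω₁ ω₂) b U ≤
          ENNReal.ofReal C *
            (broadNorm n k A p β δ W (fun i => tube n δ (a₁ i) (v₁ i)) ω₁ b U +
              broadNorm n k A p β δ W (fun i => tube n δ (a₂ i) (v₂ i)) ω₂ b U) :=
  statement7_general n k p hp A

end
end

section
/- Logarithmic convexity of k-broad norms: let U ⊆ ℝⁿ be measurable, 1 ≤ p, p₀, p₁ < ∞, A ∈ ℕ, 2 ≤ k ≤ n, and let θ ∈ [0,1] satisfy 1/p = (1−θ)/p₀ + θ/p₁. There is a constant C = C(n, p₀, p₁) such that for any 0 < δ < β and any finite family 𝕋 of δ-tubes (with any fixed cap partition), ‖Σ_{T∈𝕋} χ_T‖_{BL^p_{k,2A}(U)} ≤ C · ‖Σ_{T∈𝕋} χ_T‖^{1−θ}_{BL^{p₀}_{k,A}(U)} · ‖Σ_{T∈𝕋} χ_T‖^{θ}_{BL^{p₁}_{k,A}(U)}. -/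
open MeasureTheory Metric InnerProductGeometry
open scoped RealInnerProductSpace ENNReal NNReal

noncomputable section

theorem Submodule.exists_finrank_eq {K E : Type*} [DivisionRing K] [AddCommGroup E]
    [Module K E] [FiniteDimensional K E] {r : ℕ} (hr : r ≤ Module.finrank K E) :
    ∃ V : Submodule K E, Module.finrank K V = r := by
  let b := Module.finBasis K E
  refine ⟨Submodule.span K (Set.range (b ∘ Fin.castLE hr)), ?_⟩
  rw [finrank_span_eq_card (b.linearIndependent.comp _ (Fin.castLE_injective hr)),
    Fintype.card_fin]

theorem ENNReal.iInf_rpow {ι : Sort*} [Nonempty ι] (f : ι → ℝ≥0∞) {e : ℝ} (he : 0 ≤ e) :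
    (⨅ i, f i) ^ e = ⨅ i, f i ^ e := by
  rcases he.eq_or_lt with rfl | he
  · simp
  · exact (ENNReal.orderIsoRpow e he).map_iInf f

theorem lintegral_rpow_interpolate_le {α : Type*} [MeasurableSpace α] {μ : Measure α}
    {F : α → ℝ≥0∞} (hF : AEMeasurable F μ) {p₀ p₁ e₀ e₁ : ℝ} (hp₀ : 0 ≤ p₀) (hp₁ : 0 ≤ p₁)
    (h₀ : 0 ≤ e₀) (h₁ : 0 ≤ e₁) (hsum : e₀ + e₁ = 1) :
    ∫⁻ x, F x ^ (p₀ * e₀ + p₁ * e₁) ∂μ ≤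
      (∫⁻ x, F x ^ p₀ ∂μ) ^ e₀ * (∫⁻ x, F x ^ p₁ ∂μ) ^ e₁ := by
  have hsplit : ∀ x, F x ^ (p₀ * e₀ + p₁ * e₁) = (F x ^ p₀) ^ e₀ * (F x ^ p₁) ^ e₁ := fun x => by
    rw [ENNReal.rpow_add_of_nonneg _ _ (by positivity) (by positivity), ENNReal.rpow_mul,
      ENNReal.rpow_mul]
  simp_rw [hsplit]
  exact ENNReal.lintegral_mul_norm_pow_le (hF.pow_const _) (hF.pow_const _) h₀ h₁ hsum

theorem ENNReal.tsum_rpow_mul_rpow_le {ι : Type*} (u v : ι → ℝ≥0∞) {e₀ e₁ : ℝ}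
    (h₀ : 0 ≤ e₀) (h₁ : 0 ≤ e₁) (hsum : e₀ + e₁ = 1) :
    ∑' j, u j ^ e₀ * v j ^ e₁ ≤ (∑' j, u j) ^ e₀ * (∑' j, v j) ^ e₁ := by
  let _ : MeasurableSpace ι := ⊤
  simpa only [lintegral_count] using ENNReal.lintegral_mul_norm_pow_le (μ := Measure.count)
    (f := u) (g := v)
    measurable_from_top.aemeasurable measurable_from_top.aemeasurable h₀ h₁ hsum

theorem ENNReal.tsum_mul_le_of_le_rpow_mul_rpow {ι : Type*} (w μ μ₀ μ₁ : ι → ℝ≥0∞)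
    {e₀ e₁ : ℝ} (h₀ : 0 ≤ e₀) (h₁ : 0 ≤ e₁) (hsum : e₀ + e₁ = 1)
    (hμ : ∀ j, μ j ≤ μ₀ j ^ e₀ * μ₁ j ^ e₁) :
    ∑' j, w j * μ j ≤ (∑' j, w j * μ₀ j) ^ e₀ * (∑' j, w j * μ₁ j) ^ e₁ := by
  refine le_trans (ENNReal.tsum_le_tsum fun j => ?_) (tsum_rpow_mul_rpow_le _ _ h₀ h₁ hsum)
  calc w j * μ j ≤ (w j ^ e₀ * w j ^ e₁) * (μ₀ j ^ e₀ * μ₁ j ^ e₁) := by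
        rw [← ENNReal.rpow_add_of_nonneg _ _ h₀ h₁, hsum, ENNReal.rpow_one]
        exact mul_le_mul_right (hμ j) _
    _ = (w j * μ₀ j) ^ e₀ * (w j * μ₁ j) ^ e₁ := by
        rw [ENNReal.mul_rpow_of_nonneg _ _ h₀, ENNReal.mul_rpow_of_nonneg _ _ h₁,
          mul_mul_mul_comm]

def tubeCount {n : ℕ} {ι : Type} (T : ι → Set (Esp n)) (ω : ι → Esp n) (ω₀ x : Esp n) :
    ℝ≥0∞ :=
  ∑' i : {i : ι // ω i = ω₀}, Set.indicator (T i.1) (fun _ => (1 : ℝ≥0∞)) x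

def broadSup {n : ℕ} (p β δ : ℝ) (W : Set (Esp n)) {ι : Type} (T : ι → Set (Esp n))
    (ω : ι → Esp n) (c : Esp n) {A : ℕ} (V : Fin A → Submodule ℝ (Esp n)) : ℝ≥0∞ :=
  ⨆ ω₀ : {ω₀ : Esp n // ω₀ ∈ W ∧ ∀ a, β < angleCap β ω₀ (V a)},
    ∫⁻ x in ball c δ, tubeCount T ω ω₀.1 x ^ p

section BroadMu

variable {n : ℕ} {β δ : ℝ} {W : Set (Esp n)} {ι : Type} [Fintype ι]
  {T : ι → Set (Esp n)} {ω : ι → Esp n} {c : Esp n}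

lemma measurable_tubeCount (hT : ∀ i, MeasurableSet (T i)) (ω₀ : Esp n) :
    Measurable (tubeCount T ω ω₀) := by
  classical
  unfold tubeCount
  simp only [tsum_fintype]
  exact Finset.measurable_sum _ fun i _ => measurable_const.indicator (hT i.1)

lemma tubeCount_le_card (ω₀ x : Esp n) : tubeCount T ω ω₀ x ≤ Fintype.card ι := by
  classical
  calc tubeCount T ω ω₀ x ≤ ∑' _ : {i : ι // ω i = ω₀}, (1 : ℝ≥0∞) :=
        ENNReal.tsum_le_tsum fun i => Set.indicator_le_self' (fun _ _ => zero_le_one) x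
    _ ≤ Fintype.card ι := by
        rw [tsum_fintype, Finset.sum_const, nsmul_one, Finset.card_univ]
        exact_mod_cast Fintype.card_subtype_le _

lemma broadSup_ne_top {A : ℕ} {p : ℝ} (hp : 0 ≤ p) (V : Fin A → Submodule ℝ (Esp n)) :
    broadSup p β δ W T ω c V ≠ ∞ := by
  refine ne_top_of_le_ne_top (b := (Fintype.card ι : ℝ≥0∞) ^ p * volume (ball c δ))
    (ENNReal.mul_ne_top (ENNReal.rpow_ne_top_of_nonneg hp (ENNReal.natCast_ne_top _))
      measure_ball_lt_top.ne) (iSup_le fun ω₀ => ?_)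
  calc ∫⁻ x in ball c δ, tubeCount T ω ω₀.1 x ^ p
      ≤ ∫⁻ _ in ball c δ, (Fintype.card ι : ℝ≥0∞) ^ p :=
        lintegral_mono fun x => ENNReal.rpow_le_rpow (tubeCount_le_card _ x) hp
    _ = (Fintype.card ι : ℝ≥0∞) ^ p * volume (ball c δ) := setLIntegral_const _ _

lemma broadSup_append_le (hT : ∀ i, MeasurableSet (T i)) {A₀ A₁ : ℕ}
    (V₀ : Fin A₀ → Submodule ℝ (Esp n)) (V₁ : Fin A₁ → Submodule ℝ (Esp n))
    {p₀ p₁ e₀ e₁ : ℝ} (hp₀ : 0 ≤ p₀) (hp₁ : 0 ≤ p₁) (h₀ : 0 ≤ e₀) (h₁ : 0 ≤ e₁)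
    (hsum : e₀ + e₁ = 1) :
    broadSup (p₀ * e₀ + p₁ * e₁) β δ W T ω c (Fin.append V₀ V₁) ≤
      broadSup p₀ β δ W T ω c V₀ ^ e₀ * broadSup p₁ β δ W T ω c V₁ ^ e₁ := by
  refine iSup_le fun ⟨ω₀, hW, htrans⟩ => ?_
  rw [Fin.forall_fin_add] at htrans
  simp only [Fin.append_left, Fin.append_right] at htrans
  calc ∫⁻ x in ball c δ, tubeCount T ω ω₀ x ^ (p₀ * e₀ + p₁ * e₁)
      ≤ (∫⁻ x in ball c δ, tubeCount T ω ω₀ x ^ p₀) ^ e₀ *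
          (∫⁻ x in ball c δ, tubeCount T ω ω₀ x ^ p₁) ^ e₁ :=
        lintegral_rpow_interpolate_le (measurable_tubeCount hT ω₀).aemeasurable hp₀ hp₁ h₀ h₁ hsum
    _ ≤ _ := by
        gcongr
        · exact le_iSup_of_le ⟨ω₀, hW, htrans.1⟩ le_rfl
        · exact le_iSup_of_le ⟨ω₀, hW, htrans.2⟩ le_rfl

variable {k : ℕ}

lemma broadMu_eq_iInf_broadSup (A : ℕ) (p : ℝ) :
    broadMu n k A p β δ W T ω c = ⨅ V : {V : Fin A → Submodule ℝ (Esp n) //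
      ∀ a, Module.finrank ℝ (V a) = k - 1}, broadSup p β δ W T ω c V.1 :=
  rfl

lemma broadMu_add_le (hkn : k - 1 ≤ n) (hT : ∀ i, MeasurableSet (T i)) {A₀ A₁ : ℕ}
    {p₀ p₁ e₀ e₁ : ℝ} (hp₀ : 0 ≤ p₀) (hp₁ : 0 ≤ p₁) (h₀ : 0 ≤ e₀) (h₁ : 0 ≤ e₁)
    (hsum : e₀ + e₁ = 1) :
    broadMu n k (A₀ + A₁) (p₀ * e₀ + p₁ * e₁) β δ W T ω c ≤
      broadMu n k A₀ p₀ β δ W T ω c ^ e₀ * broadMu n k A₁ p₁ β δ W T ω c ^ e₁ := by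
  obtain ⟨V, hV⟩ : ∃ V : Submodule ℝ (Esp n), Module.finrank ℝ V = k - 1 :=
    Submodule.exists_finrank_eq (by rwa [finrank_euclideanSpace_fin])
  have hne : ∀ A, Nonempty {V : Fin A → Submodule ℝ (Esp n) //
      ∀ a, Module.finrank ℝ (V a) = k - 1} := fun A => ⟨⟨fun _ => V, fun _ => hV⟩⟩
  have := hne A₀
  have := hne A₁
  rw [broadMu_eq_iInf_broadSup, broadMu_eq_iInf_broadSup, broadMu_eq_iInf_broadSup,
    ENNReal.iInf_rpow _ h₀, ENNReal.iInf_rpow _ h₁]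
  refine ENNReal.le_iInf_mul_iInf
    ⟨(hne A₀).some, ENNReal.rpow_ne_top_of_nonneg h₀ (broadSup_ne_top hp₀ _)⟩
    ⟨(hne A₁).some, ENNReal.rpow_ne_top_of_nonneg h₁ (broadSup_ne_top hp₁ _)⟩
    fun V₀ V₁ => iInf_le_of_le ⟨Fin.append V₀.1 V₁.1, ?_⟩
      (broadSup_append_le hT _ _ hp₀ hp₁ h₀ h₁ hsum)
  rw [Fin.forall_fin_add]
  exact ⟨fun i => by rw [Fin.append_left]; exact V₀.2 i,
    fun i => by rw [Fin.append_right]; exact V₁.2 i⟩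

theorem broadNorm_add_le (hkn : k - 1 ≤ n) (hT : ∀ i, MeasurableSet (T i)) (b : ℕ → Esp n)
    (U : Set (Esp n)) {A₀ A₁ : ℕ} {p p₀ p₁ θ : ℝ} (hp₀ : 0 < p₀) (hp₁ : 0 < p₁)
    (hθ0 : 0 ≤ θ) (hθ1 : θ ≤ 1) (hconv : 1 / p = (1 - θ) / p₀ + θ / p₁) :
    broadNorm n k (A₀ + A₁) p β δ W T ω b U ≤
      broadNorm n k A₀ p₀ β δ W T ω b U ^ (1 - θ) * broadNorm n k A₁ p₁ β δ W T ω b U ^ θ := by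
  have hp : 0 < p := by
    refine one_div_pos.mp (hconv ▸ ?_)
    rcases hθ1.lt_or_eq with hθ | rfl
    · exact add_pos_of_pos_of_nonneg (div_pos (by linarith) hp₀) (div_nonneg hθ0 hp₁.le)
    · simpa using hp₁
  set e₀ := (1 - θ) * p / p₀ with he₀
  set e₁ := θ * p / p₁ with he₁
  have h₀ : 0 ≤ e₀ := by have := sub_nonneg.2 hθ1; positivity
  have h₁ : 0 ≤ e₁ := by positivity
  have hsum : e₀ + e₁ = 1 := by
    calc e₀ + e₁ = p * ((1 - θ) / p₀ + θ / p₁) := by ring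
      _ = 1 := by rw [← hconv]; field_simp
  have hp_eq : p = p₀ * e₀ + p₁ * e₁ := by rw [he₀, he₁]; field_simp; ring
  have hsums := ENNReal.tsum_mul_le_of_le_rpow_mul_rpow
    (fun j => volume (ball (b j) δ ∩ U) / volume (ball (b j) δ))
    (fun j => broadMu n k (A₀ + A₁) p β δ W T ω (b j))
    (fun j => broadMu n k A₀ p₀ β δ W T ω (b j)) (fun j => broadMu n k A₁ p₁ β δ W T ω (b j))
    h₀ h₁ hsum fun j => hp_eq ▸ broadMu_add_le hkn hT hp₀.le hp₁.le h₀ h₁ hsum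
  unfold broadNorm
  calc _ ≤ (_ ^ e₀ * _ ^ e₁) ^ (1 / p) := ENNReal.rpow_le_rpow hsums (by positivity)
    _ = _ := by
      rw [ENNReal.mul_rpow_of_nonneg _ _ (by positivity), ← ENNReal.rpow_mul, ← ENNReal.rpow_mul,
        ← ENNReal.rpow_mul, ← ENNReal.rpow_mul]
      congr 2
      · rw [he₀]; field_simp
      · rw [he₁]; field_simp

end BroadMu

theorem statement8_general (n k : ℕ) (hkn : k ≤ n)
    (p p₀ p₁ : ℝ) (hp₀ : 1 ≤ p₀) (hp₁ : 1 ≤ p₁) (A : ℕ)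
    (θ : ℝ) (hθ0 : 0 ≤ θ) (hθ1 : θ ≤ 1)
    (hconv : 1 / p = (1 - θ) / p₀ + θ / p₁) :
    ∃ C : ℝ, 0 < C ∧
      ∀ (U : Set (Esp n)), MeasurableSet U →
      ∀ (β : ℝ), β < 1 → ∀ (δ : ℝ), 0 < δ → δ < β →
      ∀ (m : ℕ) (a v : Fin m → Esp n), (∀ i, ‖v i‖ = 1) →
      ∀ (W : Set (Esp n)), MaximalSeparated n β W →
      ∀ (ω : Fin m → Esp n), (∀ i, ω i ∈ W ∧ ‖v i - ω i‖ < β) →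
      ∀ (b : ℕ → Esp n),
        broadNorm n k (2 * A) p β δ W (fun i => tube n δ (a i) (v i)) ω b U ≤
          ENNReal.ofReal C *
            broadNorm n k A p₀ β δ W (fun i => tube n δ (a i) (v i)) ω b U ^ (1 - θ) *
            broadNorm n k A p₁ β δ W (fun i => tube n δ (a i) (v i)) ω b U ^ θ := by
  refine ⟨1, one_pos, fun U _ β _ δ _ _ m a v _ W _ ω _ b => ?_⟩
  rw [ENNReal.ofReal_one, one_mul, two_mul]
  exact broadNorm_add_le (by omega) (fun i => measurableSet_tube n δ (a i) (v i)) b U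
    (by linarith) (by linarith) hθ0 hθ1 hconv

/-- Logarithmic convexity of k-broad norms: if `1/p = (1−θ)/p₀ + θ/p₁` with `θ ∈ [0,1]`,
then there is `C = C(n, p₀, p₁)` such that
`‖Σ_T χ_T‖_{BL^p_{k,2A}(U)} ≤ C ‖Σ_T χ_T‖^{1−θ}_{BL^{p₀}_{k,A}(U)}
· ‖Σ_T χ_T‖^{θ}_{BL^{p₁}_{k,A}(U)}`. -/
theorem statement8 (n k : ℕ) (hn : 2 ≤ n) (hk2 : 2 ≤ k) (hkn : k ≤ n)
    (p p₀ p₁ : ℝ) (hp : 1 ≤ p) (hp₀ : 1 ≤ p₀) (hp₁ : 1 ≤ p₁) (A : ℕ)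
    (θ : ℝ) (hθ0 : 0 ≤ θ) (hθ1 : θ ≤ 1)
    (hconv : 1 / p = (1 - θ) / p₀ + θ / p₁) :
    ∃ C : ℝ, 0 < C ∧
      ∀ (U : Set (Esp n)), MeasurableSet U →
      ∀ (β : ℝ), β < 1 → ∀ (δ : ℝ), 0 < δ → δ < β →
      ∀ (m : ℕ) (a v : Fin m → Esp n), (∀ i, ‖v i‖ = 1) →
      ∀ (W : Set (Esp n)), MaximalSeparated n β W →
      ∀ (ω : Fin m → Esp n), (∀ i, ω i ∈ W ∧ ‖v i - ω i‖ < β) →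
      ∀ (b : ℕ → Esp n),
        broadNorm n k (2 * A) p β δ W (fun i => tube n δ (a i) (v i)) ω b U ≤
          ENNReal.ofReal C *
            broadNorm n k A p₀ β δ W (fun i => tube n δ (a i) (v i)) ω b U ^ (1 - θ) *
            broadNorm n k A p₁ β δ W (fun i => tube n δ (a i) (v i)) ω b U ^ θ :=
  statement8_general n k hkn p p₀ p₁ hp₀ hp₁ A θ hθ0 hθ1 hconv

end
end

section
/- Solution of the exponent linear system: let m and n be integers with 1 ≤ m < n and define γ_j := (1/n)·(1 − 1/n)^{j−m} for integers m ≤ j ≤ n−1. Then for every integer i with m+1 ≤ i ≤ n one has Σ_{j=m}^{i−1} (n + i − j − 1)·γ_j = i − m. -/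
/-!
Shift to `l = j - m` and `k = i - m`, and induct on `k`. With `r = 1 - 1/n`, passing from `k`
to `k + 1` raises every weight `n + k - l - 1` by one, which adds the geometric sum
`∑_{l<k} r^l / n = 1 - r^k`, and contributes the new term `n · r^k / n = r^k`: together exactly `1`.
-/

open Finset

theorem sum_range_weighted_geom {K : Type*} [Field K] {n : K} (hn : n ≠ 0) (k : ℕ) :
    ∑ l ∈ range k, (n + k - l - 1) * (1 / n * (1 - 1 / n) ^ l) = k := by
  induction k with
  | zero => simp
  | succ k ih =>
    have geom : ∑ l ∈ range k, 1 / n * (1 - 1 / n) ^ l = 1 - (1 - 1 / n) ^ k := by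
      rw [← mul_sum, ← mul_neg_geom_sum, sub_sub_cancel]
    calc ∑ l ∈ range (k + 1), (n + ↑(k + 1) - l - 1) * (1 / n * (1 - 1 / n) ^ l)
        = ∑ l ∈ range k, ((n + k - l - 1) * (1 / n * (1 - 1 / n) ^ l)
            + 1 / n * (1 - 1 / n) ^ l) + n * (1 / n * (1 - 1 / n) ^ k) := by
          rw [sum_range_succ]; push_cast; congr 1
          · exact sum_congr rfl fun l _ => by ring
          · ring
      _ = k + 1 := by
          rw [sum_add_distrib, ih, geom, ← mul_assoc, mul_one_div_cancel hn]; ring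
      _ = ↑(k + 1) := by push_cast; ring

theorem statement14_general (m n : ℤ) (hm : 1 ≤ m) (hmn : m < n)
    (i : ℤ) (hi : m + 1 ≤ i) :
    ∑ j ∈ Finset.Icc m (i - 1),
        ((n : ℝ) + (i : ℝ) - (j : ℝ) - 1) * (1 / (n : ℝ) * (1 - 1 / (n : ℝ)) ^ (j - m)) =
      (i : ℝ) - (m : ℝ) := by
  have hn : (n : ℝ) ≠ 0 := by exact_mod_cast (show n ≠ 0 by omega)
  obtain ⟨k, rfl⟩ : ∃ k : ℕ, i = m + k := ⟨(i - m).toNat, by omega⟩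
  have hk : (m + k - 1 + 1 - m).toNat = k := by omega
  rw [Int.Icc_eq_finset_map, sum_map, hk]
  simp only [Function.Embedding.trans_apply, Nat.castEmbedding_apply, addLeftEmbedding_apply,
    add_sub_cancel_left, zpow_natCast]
  push_cast
  rw [add_sub_cancel_left]
  exact (sum_congr rfl fun l _ => by ring).trans (sum_range_weighted_geom hn k)

/-- Solution of the exponent linear system: for integers `1 ≤ m < n` and
`γ_j = (1/n)(1 − 1/n)^{j−m}`, one has `Σ_{j=m}^{i−1} (n+i−j−1)γ_j = i − m` for all
integers `m+1 ≤ i ≤ n`. -/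
theorem statement14 (m n : ℤ) (hm : 1 ≤ m) (hmn : m < n)
    (i : ℤ) (hi : m + 1 ≤ i) (hin : i ≤ n) :
    ∑ j ∈ Finset.Icc m (i - 1),
        ((n : ℝ) + (i : ℝ) - (j : ℝ) - 1) * (1 / (n : ℝ) * (1 - 1 / (n : ℝ)) ^ (j - m)) =
      (i : ℝ) - (m : ℝ) :=
  statement14_general m n hm hmn i hi
end

section
/- Let Ω ∈ (1/2, 1) be the unique real number satisfying Ω·e^Ω = 1 (equivalently e^Ω = Ω^{−1}). Then for every integer n ≥ 2, min_{k∈ℤ, 2 ≤ k ≤ n} max{ (n/(n−1))^{n−k}, (n−1)/(n−k+1) } < Ω^{−1}. -/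
/-!
Take `k = n - m` with `m = ⌊Ω (n - 1)⌋₊`. Since `1 + x < eˣ`, the first term is
`(1 + 1/(n-1))^m < e^{m/(n-1)} ≤ e^Ω = Ω⁻¹`, and since `Ω (n - 1) < m + 1`, the second term is
`(n - 1)/(m + 1) < Ω⁻¹`. As `Ω < 1`, `m ≤ n - 2`, so `k` is admissible.
-/

open Real

lemma one_add_pow_lt_exp_mul {x : ℝ} (hx₀ : -1 < x) (hx : x ≠ 0) {m : ℕ} (hm : m ≠ 0) :
    (1 + x) ^ m < exp (m * x) := by
  rw [exp_nat_mul, add_comm]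
  exact pow_lt_pow_left₀ (add_one_lt_exp hx) (by linarith) hm

lemma one_add_inv_pow_floor_mul_lt_exp {a c : ℝ} (ha : 0 < a) (hc : 0 < c) :
    (1 + a⁻¹) ^ ⌊c * a⌋₊ < exp c := by
  rcases eq_or_ne ⌊c * a⌋₊ 0 with hm | hm
  · simpa [hm] using one_lt_exp_iff.mpr hc
  calc (1 + a⁻¹) ^ ⌊c * a⌋₊ < exp (⌊c * a⌋₊ * a⁻¹) :=
        one_add_pow_lt_exp_mul (by linarith [inv_pos.mpr ha]) (inv_ne_zero ha.ne') hm
    _ ≤ exp c := by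
        gcongr
        rw [← div_eq_mul_inv, div_le_iff₀ ha]
        exact Nat.floor_le (by positivity)

lemma div_floor_mul_add_one_lt_inv {a c : ℝ} (hc : 0 < c) :
    a / (⌊c * a⌋₊ + 1) < c⁻¹ := by
  rw [div_lt_iff₀ (by positivity), ← div_eq_inv_mul, lt_div_iff₀ hc, mul_comm]
  exact Nat.lt_floor_add_one _

lemma floor_mul_sub_one_add_two_le {c : ℝ} (hc : c < 1) {n : ℕ} (hn : 2 ≤ n) :
    ⌊c * ((n : ℝ) - 1)⌋₊ + 2 ≤ n := by
  have hn₁ : (1 : ℝ) < n := by exact_mod_cast hn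
  have : ⌊c * ((n : ℝ) - 1)⌋₊ < n - 1 := by
    rw [Nat.floor_lt' (by omega), Nat.cast_sub (by omega), Nat.cast_one]
    exact mul_lt_of_lt_one_left (sub_pos.mpr hn₁) hc
  omega

lemma pos_of_mul_exp_eq_one {x : ℝ} (h : x * exp x = 1) : 0 < x := by
  rw [eq_inv_of_mul_eq_one_left h]; positivity

lemma exp_eq_inv_of_mul_exp_eq_one {x : ℝ} (h : x * exp x = 1) : exp x = x⁻¹ :=
  eq_inv_of_mul_eq_one_right h

lemma lt_one_of_mul_exp_eq_one {x : ℝ} (h : x * exp x = 1) : x < 1 := by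
  rw [eq_inv_of_mul_eq_one_left h]
  exact inv_lt_one_of_one_lt₀ (one_lt_exp_iff.mpr (pos_of_mul_exp_eq_one h))

theorem statement15_general (Ω : ℝ)
    (hΩ : Ω * Real.exp Ω = 1) (n : ℕ) (hn : 2 ≤ n) :
    (Finset.Icc 2 n).inf' (Finset.nonempty_Icc.mpr hn)
        (fun k => max (((n : ℝ) / ((n : ℝ) - 1)) ^ (n - k))
          (((n : ℝ) - 1) / ((n : ℝ) - (k : ℝ) + 1))) < Ω⁻¹ := by
  have hΩ₀ := pos_of_mul_exp_eq_one hΩ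
  have hn₁ : (0 : ℝ) < n - 1 := by
    rw [sub_pos]; exact_mod_cast hn
  set m := ⌊Ω * ((n : ℝ) - 1)⌋₊
  have hm : m + 2 ≤ n := floor_mul_sub_one_add_two_le (lt_one_of_mul_exp_eq_one hΩ) hn
  rw [Finset.inf'_lt_iff]
  refine ⟨n - m, Finset.mem_Icc.mpr ⟨by omega, by omega⟩, max_lt ?_ ?_⟩
  · have hbase : (n : ℝ) / (n - 1) = 1 + ((n : ℝ) - 1)⁻¹ := by
      field_simp; ring
    rw [Nat.sub_sub_self (by omega), hbase, ← exp_eq_inv_of_mul_exp_eq_one hΩ]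
    exact one_add_inv_pow_floor_mul_lt_exp hn₁ hΩ₀
  · rw [Nat.cast_sub (by omega), sub_sub_cancel]
    exact div_floor_mul_add_one_lt_inv hΩ₀

/-- For the omega constant `Ω ∈ (1/2, 1)` (the solution of `Ω e^Ω = 1`), and every
`n ≥ 2`, `min_{2 ≤ k ≤ n} max{(n/(n−1))^{n−k}, (n−1)/(n−k+1)} < Ω⁻¹`. -/
theorem statement15 (Ω : ℝ) (hΩmem : Ω ∈ Set.Ioo (1 / 2 : ℝ) 1)
    (hΩ : Ω * Real.exp Ω = 1) (n : ℕ) (hn : 2 ≤ n) :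
    (Finset.Icc 2 n).inf' (Finset.nonempty_Icc.mpr hn)
        (fun k => max (((n : ℝ) / ((n : ℝ) - 1)) ^ (n - k))
          (((n : ℝ) - 1) / ((n : ℝ) - (k : ℝ) + 1))) < Ω⁻¹ :=
  statement15_general Ω hΩ n hn
end
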